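/- arXiv:0912.1663 — 4 statements merged into one kernel-verified Lean document; each statement's English description precedes it below -/
import Mathlib

section
/- Let q be a symmetric probability kernel on ℤ^d and let φ(k) = ∑_{x∈ℤ^d} q(x) cos⟨k, x⟩ for k ∈ ℝ^d. Then for all a, b > 0 and every k ∈ ℝ^d: ∫_{[−π,π]^d} e^{−b(1−φ(u)) − a(1−φ(k−u))} du ≥ e^{−a(1−φ(k))} ∫_{[−π,π]^d} e^{−(a+b)(1−φ(u))} du. -/
open scoped BigOperators
open MeasureTheory

/-- The characteristic function `φ(k) = ∑_{x∈ℤ^d} q(x) cos⟨k,x⟩` of a symmetric kernel. -/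
noncomputable def charFn {d : ℕ} (q : (Fin d → ℤ) → ℝ) (k : Fin d → ℝ) : ℝ :=
  ∑' x : Fin d → ℤ, q x * Real.cos (∑ i, k i * (x i : ℝ))

/-!
Since `φ` is an average of cosines, `cos(A - B) + cos(A + B) = 2 cos A cos B` and
`(1 - cos A)(1 - cos B) ≥ 0` give `φ(k - u) + φ(k + u) ≥ 2φ(k) + 2φ(u) - 2`. By convexity of `exp`,
the integrand `e^{-a(1-φ(k))} e^{-(a+b)(1-φ(u))}` on the left is therefore at most the mean of the
integrand on the right at `u` and at `-u`. As `φ` is even and the box is symmetric, integrating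
this mean gives the right-hand side.
-/

section CharFn

variable {d : ℕ} {q : (Fin d → ℤ) → ℝ}

lemma summable_of_tsum_eq_one (hq1 : ∑' x : Fin d → ℤ, q x = 1) : Summable q :=
  by_contra fun h => by simp [tsum_eq_zero_of_not_summable h] at hq1

lemma norm_mul_cos_le (hq0 : ∀ x, 0 ≤ q x) (x : Fin d → ℤ) (t : ℝ) :
    ‖q x * Real.cos t‖ ≤ q x := by
  rw [norm_mul, Real.norm_of_nonneg (hq0 x)]
  exact mul_le_of_le_one_right (hq0 x) (Real.abs_cos_le_one t)

lemma hasSum_charFn (hq0 : ∀ x, 0 ≤ q x) (hq : Summable q) (k : Fin d → ℝ) :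
    HasSum (fun x => q x * Real.cos (∑ i, k i * (x i : ℝ))) (charFn q k) :=
  (hq.of_norm_bounded fun x => norm_mul_cos_le hq0 x _).hasSum

lemma continuous_charFn (hq0 : ∀ x, 0 ≤ q x) (hq : Summable q) : Continuous (charFn q) :=
  continuous_tsum (fun _ => by fun_prop) hq fun x _ => norm_mul_cos_le hq0 x _

lemma charFn_neg (q : (Fin d → ℤ) → ℝ) (k : Fin d → ℝ) : charFn q (-k) = charFn q k := by
  simp only [charFn, Pi.neg_apply, neg_mul, Finset.sum_neg_distrib, Real.cos_neg]

lemma two_mul_charFn_add_two_mul_charFn_sub_two_le (hq0 : ∀ x, 0 ≤ q x)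
    (hq1 : ∑' x : Fin d → ℤ, q x = 1) (k u : Fin d → ℝ) :
    2 * charFn q k + 2 * charFn q u - 2 ≤ charFn q (k - u) + charFn q (k + u) := by
  have hq := summable_of_tsum_eq_one hq1
  have hq_two : HasSum (fun x => 2 * q x) 2 := by
    simpa using (hq1 ▸ hq.hasSum : HasSum q 1).mul_left 2
  refine hasSum_le (fun x => ?_)
    ((((hasSum_charFn hq0 hq k).mul_left 2).add ((hasSum_charFn hq0 hq u).mul_left 2)).sub
      hq_two)
    ((hasSum_charFn hq0 hq (k - u)).add (hasSum_charFn hq0 hq (k + u)))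
  simp only [Pi.sub_apply, Pi.add_apply, sub_mul, add_mul, Finset.sum_sub_distrib,
    Finset.sum_add_distrib, Real.cos_sub, Real.cos_add]
  set A := ∑ i, k i * (x i : ℝ)
  set B := ∑ i, u i * (x i : ℝ)
  have hcos : 0 ≤ q x * ((1 - Real.cos A) * (1 - Real.cos B)) :=
    mul_nonneg (hq0 x) (mul_nonneg (sub_nonneg.2 (Real.cos_le_one A))
      (sub_nonneg.2 (Real.cos_le_one B)))
  linarith

end CharFn

lemma Real.exp_add_div_two_le (x y : ℝ) :
    Real.exp ((x + y) / 2) ≤ (Real.exp x + Real.exp y) / 2 := by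
  have := convexOn_exp.2 (Set.mem_univ x) (Set.mem_univ y) (by norm_num : (0 : ℝ) ≤ 1 / 2)
    (by norm_num : (0 : ℝ) ≤ 1 / 2) (by norm_num)
  simp only [smul_eq_mul] at this
  rw [show (x + y) / 2 = 1 / 2 * x + 1 / 2 * y by ring]
  linarith

lemma setIntegral_comp_neg_of_neg_eq {G E : Type*} [MeasurableSpace G] [AddGroup G]
    [MeasurableNeg G] [NormedAddCommGroup E] [NormedSpace ℝ E] (μ : Measure G)
    [μ.IsNegInvariant] {s : Set G} (hs : -s = s) (f : G → E) :
    ∫ x in s, f (-x) ∂μ = ∫ x in s, f x ∂μ := by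
  conv_lhs => rw [← hs, ← Set.neg_preimage]
  exact (Measure.measurePreserving_neg μ).setIntegral_preimage_emb
    (MeasurableEquiv.neg G).measurableEmbedding f s

lemma neg_univ_pi_Icc_neg_self {ι : Type*} (c : ℝ) :
    -Set.univ.pi (fun _ : ι => Set.Icc (-c) c) = Set.univ.pi (fun _ : ι => Set.Icc (-c) c) := by
  ext v
  simp only [Set.mem_neg, Set.mem_univ_pi, Pi.neg_apply, Set.mem_Icc, neg_le_neg_iff,
    neg_le]
  exact forall_congr' fun _ => and_comm

theorem stmt7_general (d : ℕ) (q : (Fin d → ℤ) → ℝ)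
    (hq0 : ∀ x, 0 ≤ q x) (hq1 : ∑' x : Fin d → ℤ, q x = 1) :
    ∀ a b : ℝ, 0 < a → 0 < b → ∀ k : Fin d → ℝ,
      Real.exp (-a * (1 - charFn q k)) *
        (∫ u in Set.univ.pi (fun _ : Fin d => Set.Icc (-Real.pi) Real.pi),
          Real.exp (-(a + b) * (1 - charFn q u))) ≤
      ∫ u in Set.univ.pi (fun _ : Fin d => Set.Icc (-Real.pi) Real.pi),
        Real.exp (-b * (1 - charFn q u) - a * (1 - charFn q (k - u))) := by
  intro a b ha _ k
  set box := Set.univ.pi fun _ : Fin d => Set.Icc (-Real.pi) Real.pi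
  set f := fun u => Real.exp (-b * (1 - charFn q u) - a * (1 - charFn q (k - u)))
  have hφ := continuous_charFn hq0 (summable_of_tsum_eq_one hq1)
  have hbox : IsCompact box := isCompact_univ_pi fun _ => isCompact_Icc
  have hf : IntegrableOn f box :=
    (by fun_prop : Continuous f).continuousOn.integrableOn_compact hbox
  have hf_neg : IntegrableOn (fun u => f (-u)) box :=
    (by fun_prop : Continuous fun u => f (-u)).continuousOn.integrableOn_compact hbox
  have hpoint (u) : Real.exp (-a * (1 - charFn q k)) * Real.exp (-(a + b) * (1 - charFn q u)) ≤
      (f u + f (-u)) / 2 := by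
    have := mul_le_mul_of_nonneg_left
      (two_mul_charFn_add_two_mul_charFn_sub_two_le hq0 hq1 k u) ha.le
    simp only [f, charFn_neg, sub_neg_eq_add, ← Real.exp_add]
    refine (Real.exp_le_exp.2 ?_).trans (Real.exp_add_div_two_le _ _)
    linarith
  calc Real.exp (-a * (1 - charFn q k)) * ∫ u in box, Real.exp (-(a + b) * (1 - charFn q u))
      = ∫ u in box, Real.exp (-a * (1 - charFn q k)) * Real.exp (-(a + b) * (1 - charFn q u)) :=
        (integral_const_mul _ _).symm
    _ ≤ ∫ u in box, (f u + f (-u)) / 2 :=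
        integral_mono_of_nonneg (.of_forall fun _ => by positivity)
          ((hf.add hf_neg).div_const 2) (.of_forall hpoint)
    _ = ∫ u in box, f u := by
        rw [integral_div, integral_add hf hf_neg,
          setIntegral_comp_neg_of_neg_eq volume (neg_univ_pi_Icc_neg_self _) f]
        ring

/-- For a symmetric probability kernel `q` on `ℤ^d` with characteristic function `φ`,
for all `a, b > 0` and all `k ∈ ℝ^d`,
`∫_{[-π,π]^d} e^{-b(1-φ(u)) - a(1-φ(k-u))} du ≥ e^{-a(1-φ(k))} ∫_{[-π,π]^d} e^{-(a+b)(1-φ(u))} du`. -/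
theorem stmt7 (d : ℕ) (hd : 1 ≤ d) (q : (Fin d → ℤ) → ℝ)
    (hq0 : ∀ x, 0 ≤ q x) (hq1 : ∑' x : Fin d → ℤ, q x = 1)
    (hsym : ∀ x, q (-x) = q x) :
    ∀ a b : ℝ, 0 < a → 0 < b → ∀ k : Fin d → ℝ,
      Real.exp (-a * (1 - charFn q k)) *
        (∫ u in Set.univ.pi (fun _ : Fin d => Set.Icc (-Real.pi) Real.pi),
          Real.exp (-(a + b) * (1 - charFn q u))) ≤
      ∫ u in Set.univ.pi (fun _ : Fin d => Set.Icc (-Real.pi) Real.pi),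
        Real.exp (-b * (1 - charFn q u) - a * (1 - charFn q (k - u))) :=
  stmt7_general d q hq0 hq1
end

section
/- Let α ∈ (0,1) and c_K > 0, and let G be a random variable with values in (0,∞) whose Laplace transform is E[e^{−λG}] = exp(−(c_K Γ(1−α)/α) λ^α) for all λ ≥ 0. Then E[G^{−α}] = sin(απ)/(c_K π). -/
/-!
Integrating `Γ(α) x^(-α) = ∫₀^∞ t^(α-1) e^(-x t) dt` at `x = G` and swapping the integrals
(Tonelli) expresses the negative moment through the Laplace transform:
`Γ(α) E[G^(-α)] = ∫₀^∞ t^(α-1) exp(-C t^α) dt = 1 / (C α) = 1 / (c_K Γ(1-α))`,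
with `C = c_K Γ(1-α) / α`. Euler's reflection formula `Γ(α) Γ(1-α) = π / sin(πα)` finishes.
-/

open MeasureTheory ProbabilityTheory Real Set

lemma lintegral_Ioi_rpow_sub_one_mul_exp_neg_mul {a x : ℝ} (ha : 0 < a) (hx : 0 < x) :
    ∫⁻ t in Ioi (0 : ℝ), ENNReal.ofReal (t ^ (a - 1) * exp (-(x * t))) =
      ENNReal.ofReal (Gamma a * x ^ (-a)) := by
  have hint : IntegrableOn (fun t : ℝ => t ^ (a - 1) * exp (-(x * t))) (Ioi 0) := by
    simpa [rpow_one, neg_mul] using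
      integrableOn_rpow_mul_exp_neg_mul_rpow (p := 1) (by linarith) one_pos hx
  rw [← ofReal_integral_eq_lintegral_ofReal hint
      (ae_restrict_of_forall_mem measurableSet_Ioi fun t (ht : 0 < t) => by positivity),
    integral_rpow_mul_exp_neg_mul_Ioi ha hx, one_div, inv_rpow hx.le, ← rpow_neg hx.le, mul_comm]

lemma integral_Ioi_rpow_sub_one_mul_exp_neg_mul_rpow {a b : ℝ} (ha : 0 < a) (hb : 0 < b) :
    ∫ t in Ioi (0 : ℝ), t ^ (a - 1) * exp (-b * t ^ a) = 1 / (b * a) := by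
  rw [integral_rpow_mul_exp_neg_mul_rpow ha (by linarith) hb, sub_add_cancel,
    div_self ha.ne', Gamma_one, mul_one, neg_div, div_self ha.ne', rpow_neg_one]
  field_simp

lemma Gamma_mul_integral_rpow_neg_eq_integral_laplace {Ω : Type*} [MeasurableSpace Ω]
    {μ : Measure Ω} [IsFiniteMeasure μ] {G : Ω → ℝ} (hG : Measurable G) (hGpos : ∀ ω, 0 < G ω)
    {s : ℝ} (hs : 0 < s) :
    Gamma s * ∫ ω, G ω ^ (-s) ∂μ =
      ∫ t in Ioi (0 : ℝ), t ^ (s - 1) * ∫ ω, exp (-t * G ω) ∂μ := by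
  have hinner : ∀ t : ℝ, 0 < t → ∫⁻ ω, ENNReal.ofReal (t ^ (s - 1) * exp (-(G ω * t))) ∂μ =
      ENNReal.ofReal (t ^ (s - 1) * ∫ ω, exp (-t * G ω) ∂μ) := by
    intro t ht
    have hint : Integrable (fun ω => exp (-t * G ω)) μ := by
      refine .of_bound (by fun_prop) 1 (.of_forall fun ω => ?_)
      rw [norm_of_nonneg (exp_pos _).le, exp_le_one_iff]
      nlinarith [hGpos ω]
    rw [← integral_const_mul, ofReal_integral_eq_lintegral_ofReal (hint.const_mul _)
      (.of_forall fun ω => by positivity)]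
    simp only [mul_comm (G _) t, neg_mul]
  have hlintegral : ∫⁻ ω, ENNReal.ofReal (Gamma s * G ω ^ (-s)) ∂μ =
      ∫⁻ t in Ioi (0 : ℝ), ENNReal.ofReal (t ^ (s - 1) * ∫ ω, exp (-t * G ω) ∂μ) :=
    calc ∫⁻ ω, ENNReal.ofReal (Gamma s * G ω ^ (-s)) ∂μ
        = ∫⁻ ω, (∫⁻ t in Ioi (0 : ℝ), ENNReal.ofReal (t ^ (s - 1) * exp (-(G ω * t)))) ∂μ :=
          lintegral_congr fun ω => (lintegral_Ioi_rpow_sub_one_mul_exp_neg_mul hs (hGpos ω)).symm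
      _ = ∫⁻ t in Ioi (0 : ℝ), ∫⁻ ω, ENNReal.ofReal (t ^ (s - 1) * exp (-(G ω * t))) ∂μ :=
          lintegral_lintegral_swap (by fun_prop)
      _ = _ := setLIntegral_congr_fun measurableSet_Ioi hinner
  have hlaplace_meas : StronglyMeasurable fun t : ℝ => ∫ ω, exp (-t * G ω) ∂μ :=
    (by fun_prop : Measurable fun p : ℝ × Ω => exp (-p.1 * G p.2)).stronglyMeasurable
      |>.integral_prod_right'
  rw [← integral_const_mul, integral_eq_lintegral_of_nonneg_ae
      (.of_forall fun ω => by have := hGpos ω; positivity)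
      ((hG.pow_const _).const_mul _).aestronglyMeasurable, hlintegral,
    ← integral_eq_lintegral_of_nonneg_ae]
  · exact ae_restrict_of_forall_mem measurableSet_Ioi fun t (ht : 0 < t) =>
      mul_nonneg (by positivity) (integral_nonneg fun ω => (exp_pos _).le)
  · exact ((measurable_id.pow_const _).mul hlaplace_meas.measurable).aestronglyMeasurable

/-- If `G` is a positive random variable with Laplace transform
`E[e^{-λG}] = exp(-(c_K Γ(1-α)/α) λ^α)` for all `λ ≥ 0` (one-sided stable of index
`α ∈ (0,1)`), then `E[G^{-α}] = sin(απ)/(c_K π)`. -/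
theorem stmt10 (α c_K : ℝ) (hα : α ∈ Set.Ioo (0:ℝ) 1) (hcK : 0 < c_K)
    {Ω : Type*} [MeasureSpace Ω] [IsProbabilityMeasure (ℙ : Measure Ω)]
    (G : Ω → ℝ) (hGmeas : Measurable G) (hGpos : ∀ ω, 0 < G ω)
    (hGlap : ∀ l : ℝ, 0 ≤ l →
      ∫ ω, Real.exp (-l * G ω) =
        Real.exp (-(c_K * Real.Gamma (1 - α) / α) * l ^ α)) :
    ∫ ω, (G ω) ^ (-α) = Real.sin (α * Real.pi) / (c_K * Real.pi) := by
  obtain ⟨hα0, hα1⟩ := hα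
  have hΓα : 0 < Gamma α := Gamma_pos_of_pos hα0
  have hΓ1α : 0 < Gamma (1 - α) := Gamma_pos_of_pos (by linarith)
  have hmoment : Gamma α * ∫ ω, G ω ^ (-α) = 1 / (c_K * Gamma (1 - α)) := by
    rw [Gamma_mul_integral_rpow_neg_eq_integral_laplace hGmeas hGpos hα0,
      setIntegral_congr_fun measurableSet_Ioi fun t (ht : 0 < t) => by rw [hGlap t ht.le],
      integral_Ioi_rpow_sub_one_mul_exp_neg_mul_rpow hα0 (by positivity)]
    field_simp
  calc ∫ ω, G ω ^ (-α) = (c_K * (Gamma α * Gamma (1 - α)))⁻¹ := by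
        field_simp at hmoment ⊢
        linear_combination hmoment
    _ = sin (α * π) / (c_K * π) := by
        rw [Gamma_mul_Gamma_one_sub, mul_comm α π, mul_inv, inv_div]
        ring
end

section
/- With K, α, c_K as in the context, there exists t₀ > 0 such that for every n ≥ 1 and every t ≥ n t₀: K^{*n}(t) ≤ 2 n c_K (n/t)^{1+α}. -/
/-!
Pick `t₀` beyond which `x ^ (1 + α) * K x ≤ 2 c_K`; more generally suppose `x ^ p * K x ≤ C`
for `x ≥ t₀`. Then `K^{*(n+1)}(t) ≤ (n+1) C ((n+1)/t) ^ p` for `t ≥ (n+1) t₀`, by induction on `n`: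
split `K^{*(n+1)}(t) = ∫ K^{*n}(s) K(t - s) ds` at `s = n t / (n+1)`. To the left, `t - s ≥ t/(n+1)`
lies in the tail of `K`, so `K(t - s) ≤ C ((n+1)/t) ^ p`, integrated against the mass `≤ 1` of
`K^{*n}`; to the right, the inductive bound gives `K^{*n}(s) ≤ n C ((n+1)/t) ^ p`, integrated
against the mass `≤ 1` of `K(t - ·)`. The two parts add up to the claimed bound, with no loss
in the constant.
-/

open MeasureTheory Filter

/-- Iterated convolutions: `Kconv K n = K^{*(n+1)}`, the `(n+1)`-fold convolution of `K`. -/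
noncomputable def Kconv (K : ℝ → ℝ) : ℕ → ℝ → ℝ
  | 0 => K
  | n + 1 => fun t => ∫ s : ℝ, Kconv K n s * K (t - s)

open scoped ENNReal

theorem lintegral_mul_le_of_le_on_of_le_on_compl {α : Type*} [MeasurableSpace α]
    {μ : Measure α} {f g : α → ℝ≥0∞} {s : Set α} {a b : ℝ≥0∞} (hs : MeasurableSet s)
    (hf : AEMeasurable f μ) (hg : AEMeasurable g μ)
    (hgs : ∀ x ∈ s, g x ≤ b) (hfs : ∀ x ∉ s, f x ≤ a) :
    ∫⁻ x, f x * g x ∂μ ≤ b * ∫⁻ x, f x ∂μ + a * ∫⁻ x, g x ∂μ := by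
  rw [← lintegral_add_compl _ hs]
  gcongr
  · calc ∫⁻ x in s, f x * g x ∂μ ≤ ∫⁻ x in s, b * f x ∂μ :=
          setLIntegral_mono' hs fun x hx => by rw [mul_comm]; gcongr; exact hgs x hx
      _ = b * ∫⁻ x in s, f x ∂μ := lintegral_const_mul'' b hf.restrict
      _ ≤ b * ∫⁻ x, f x ∂μ := by gcongr; exact Measure.restrict_le_self
  · calc ∫⁻ x in sᶜ, f x * g x ∂μ ≤ ∫⁻ x in sᶜ, a * g x ∂μ :=
          setLIntegral_mono' hs.compl fun x hx => by gcongr; exact hfs x hx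
      _ = a * ∫⁻ x in sᶜ, g x ∂μ := lintegral_const_mul'' a hg.restrict
      _ ≤ a * ∫⁻ x, g x ∂μ := by gcongr; exact Measure.restrict_le_self

theorem lintegral_lconvolution {G : Type*} [MeasurableSpace G] [AddGroup G]
    [MeasurableAdd₂ G] [MeasurableNeg G] {μ : Measure G} [μ.IsAddLeftInvariant] [SFinite μ]
    {f g : G → ℝ≥0∞} (hf : AEMeasurable f μ) (hg : AEMeasurable g μ) :
    ∫⁻ x, (f ⋆ₗ[μ] g) x ∂μ = (∫⁻ x, f x ∂μ) * ∫⁻ x, g x ∂μ := by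
  simp only [lconvolution_def]
  rw [lintegral_lintegral_swap (by fun_prop), ← lintegral_mul_const'' _ hf]
  congr with y
  rw [lintegral_add_left_eq_self (fun x => f y * g x) (-y), lintegral_const_mul'' _ hg]

theorem le_mul_inv_rpow_of_rpow_mul_le {p C k x y : ℝ} (hp : 0 ≤ p) (hC : 0 ≤ C) (hy : 0 < y)
    (hyx : y ≤ x) (h : x ^ p * k ≤ C) : k ≤ C * y⁻¹ ^ p := by
  have hx : 0 < x ^ p := Real.rpow_pos_of_pos (hy.trans_le hyx) p
  calc k = (x ^ p * k) / x ^ p := by field_simp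
    _ ≤ C / x ^ p := by gcongr
    _ ≤ C / y ^ p := by gcongr
    _ = C * y⁻¹ ^ p := by rw [Real.inv_rpow hy.le, div_eq_mul_inv]

section Kconv

variable {K : ℝ → ℝ}

theorem measurable_Kconv (hK : Measurable K) : ∀ n, Measurable (Kconv K n)
  | 0 => hK
  | n + 1 => by
    have h : StronglyMeasurable (Function.uncurry fun t s => Kconv K n s * K (t - s)) :=
      (((measurable_Kconv hK n).comp measurable_snd).mul
        (hK.comp (measurable_fst.sub measurable_snd))).stronglyMeasurable
    exact h.integral_prod_right'.measurable

theorem Kconv_nonneg (hK0 : ∀ t, 0 ≤ K t) : ∀ n t, 0 ≤ Kconv K n t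
  | 0, t => hK0 t
  | n + 1, _ => integral_nonneg fun s => mul_nonneg (Kconv_nonneg hK0 n s) (hK0 _)

theorem Kconv_succ_eq_toReal_lconvolution (hK : Measurable K) (hK0 : ∀ t, 0 ≤ K t)
    (n : ℕ) (t : ℝ) :
    Kconv K (n + 1) t = (((ENNReal.ofReal ∘ Kconv K n) ⋆ₗ (ENNReal.ofReal ∘ K)) t).toReal := by
  have hm : AEStronglyMeasurable (fun s => Kconv K n s * K (t - s)) volume := by
    have := measurable_Kconv hK n
    fun_prop
  change ∫ s, Kconv K n s * K (t - s) = _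
  rw [integral_eq_lintegral_of_nonneg_ae
    (.of_forall fun s => mul_nonneg (Kconv_nonneg hK0 n s) (hK0 _)) hm, lconvolution_def]
  congr 1
  refine lintegral_congr fun s => ?_
  rw [Function.comp_apply, Function.comp_apply, neg_add_eq_sub,
    ENNReal.ofReal_mul (Kconv_nonneg hK0 n s)]

theorem lintegral_ofReal_Kconv_le_one (hK : Measurable K) (hK0 : ∀ t, 0 ≤ K t)
    (hK1 : ∫⁻ t, ENNReal.ofReal (K t) ≤ 1) : ∀ n, ∫⁻ t, ENNReal.ofReal (Kconv K n t) ≤ 1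
  | 0 => hK1
  | n + 1 =>
    calc ∫⁻ t, ENNReal.ofReal (Kconv K (n + 1) t)
        ≤ ∫⁻ t, ((ENNReal.ofReal ∘ Kconv K n) ⋆ₗ (ENNReal.ofReal ∘ K)) t :=
          lintegral_mono fun t => by
            rw [Kconv_succ_eq_toReal_lconvolution hK hK0]; exact ENNReal.ofReal_toReal_le
      _ = (∫⁻ t, ENNReal.ofReal (Kconv K n t)) * ∫⁻ t, ENNReal.ofReal (K t) :=
          lintegral_lconvolution (measurable_Kconv hK n).ennreal_ofReal.aemeasurable
            hK.ennreal_ofReal.aemeasurable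
      _ ≤ 1 * 1 := by gcongr; exact lintegral_ofReal_Kconv_le_one hK hK0 hK1 n
      _ = 1 := one_mul 1

theorem Kconv_le_of_rpow_mul_le {p C t₀ : ℝ} (hp : 0 ≤ p) (ht₀ : 0 < t₀) (hK : Measurable K)
    (hK0 : ∀ t, 0 ≤ K t) (hK1 : ∫⁻ t, ENNReal.ofReal (K t) ≤ 1)
    (htail : ∀ x, t₀ ≤ x → x ^ p * K x ≤ C) (n : ℕ) (t : ℝ) (ht : ((n : ℝ) + 1) * t₀ ≤ t) :
    Kconv K n t ≤ ((n : ℝ) + 1) * C * (((n : ℝ) + 1) / t) ^ p := by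
  have hC : 0 ≤ C :=
    (mul_nonneg (Real.rpow_nonneg ht₀.le p) (hK0 t₀)).trans (htail t₀ le_rfl)
  induction n generalizing t with
  | zero =>
    simp only [Nat.cast_zero, zero_add, one_mul, one_div] at ht ⊢
    exact le_mul_inv_rpow_of_rpow_mul_le hp hC (ht₀.trans_le ht) le_rfl (htail t ht)
  | succ n ih =>
    push_cast at ht ⊢
    set N : ℝ := (n : ℝ) + 1
    have hN : 0 < N := by positivity
    set y := t / (N + 1) with hy_def
    have hty : t = (N + 1) * y := by rw [hy_def]; field_simp
    have hy₀ : t₀ ≤ y := by rw [hy_def, le_div_iff₀ (by positivity)]; linarith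
    have hy : 0 < y := ht₀.trans_le hy₀
    rw [← inv_div t (N + 1), Kconv_succ_eq_toReal_lconvolution hK hK0]
    refine ENNReal.toReal_le_of_le_ofReal (by positivity) ?_
    have hleft : ∀ s ∈ Set.Iic (t - y),
        ENNReal.ofReal (K (t - s)) ≤ ENNReal.ofReal (C * y⁻¹ ^ p) :=
      fun s hs => ENNReal.ofReal_le_ofReal <| le_mul_inv_rpow_of_rpow_mul_le hp hC hy
        (by linarith [Set.mem_Iic.mp hs]) (htail _ (by linarith [Set.mem_Iic.mp hs]))
    have hright : ∀ s ∉ Set.Iic (t - y),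
        ENNReal.ofReal (Kconv K n s) ≤ ENNReal.ofReal (N * C * y⁻¹ ^ p) := by
      intro s hs
      have hNs : N * y < s := by rw [Set.mem_Iic, not_le] at hs; linarith
      have hs0 : 0 < s := by nlinarith
      have hNsy : N / s ≤ y⁻¹ := by
        rw [div_le_iff₀ hs0, inv_mul_eq_div, le_div_iff₀ hy]; exact hNs.le
      refine ENNReal.ofReal_le_ofReal ((ih s (by nlinarith)).trans ?_)
      exact mul_le_mul_of_nonneg_left (Real.rpow_le_rpow (by positivity) hNsy hp)
        (by positivity)
    calc ((ENNReal.ofReal ∘ Kconv K n) ⋆ₗ (ENNReal.ofReal ∘ K)) t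
        = ∫⁻ s, ENNReal.ofReal (Kconv K n s) * ENNReal.ofReal (K (t - s)) := by
          simp only [lconvolution_def, Function.comp_apply, neg_add_eq_sub]
      _ ≤ ENNReal.ofReal (C * y⁻¹ ^ p) * (∫⁻ s, ENNReal.ofReal (Kconv K n s))
            + ENNReal.ofReal (N * C * y⁻¹ ^ p) * ∫⁻ s, ENNReal.ofReal (K (t - s)) :=
          lintegral_mul_le_of_le_on_of_le_on_compl measurableSet_Iic
            (measurable_Kconv hK n).ennreal_ofReal.aemeasurable
            (by fun_prop) hleft hright
      _ ≤ ENNReal.ofReal (C * y⁻¹ ^ p) * 1 + ENNReal.ofReal (N * C * y⁻¹ ^ p) * 1 := by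
          gcongr
          · exact lintegral_ofReal_Kconv_le_one hK hK0 hK1 n
          · rwa [lintegral_sub_left_eq_self (fun x => ENNReal.ofReal (K x)) t]
      _ = ENNReal.ofReal ((N + 1) * C * y⁻¹ ^ p) := by
          rw [mul_one, mul_one, ← ENNReal.ofReal_add (by positivity) (by positivity)]
          ring_nf

end Kconv

theorem stmt12_general (α c_K : ℝ) (hα : α ∈ Set.Ioo (0:ℝ) 1) (hcK : 0 < c_K)
    (K : ℝ → ℝ) (hKmeas : Measurable K) (hK0 : ∀ t, 0 ≤ K t)
    (hK1 : ∫ t, K t = 1)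
    (hKtail : Tendsto (fun t : ℝ => t ^ (1 + α) * K t) atTop (nhds c_K)) :
    ∃ t₀ : ℝ, 0 < t₀ ∧ ∀ n : ℕ, 1 ≤ n → ∀ t : ℝ, (n : ℝ) * t₀ ≤ t →
      Kconv K (n - 1) t ≤ 2 * (n : ℝ) * c_K * ((n : ℝ) / t) ^ (1 + α) := by
  have hKint : Integrable K := .of_integral_ne_zero (by rw [hK1]; exact one_ne_zero)
  have hmass : ∫⁻ t, ENNReal.ofReal (K t) ≤ 1 := by
    rw [← ofReal_integral_eq_lintegral_ofReal hKint (.of_forall hK0), hK1, ENNReal.ofReal_one]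
  obtain ⟨T, hT⟩ := eventually_atTop.mp (hKtail.eventually_le_const (by linarith : c_K < 2 * c_K))
  refine ⟨max T 1, by positivity, fun n hn t ht => ?_⟩
  obtain ⟨m, rfl⟩ := Nat.exists_eq_add_of_le' hn
  have := Kconv_le_of_rpow_mul_le (by linarith [hα.1]) (by positivity) hKmeas hK0 hmass
    (fun x hx => hT x ((le_max_left T 1).trans hx)) m t (by exact_mod_cast ht)
  push_cast at this ⊢
  linarith

/-- For a probability density `K` on `(0,∞)` with `t^{1+α}K(t) → c_K`, `α ∈ (0,1)`,
there exists `t₀ > 0` such that for every `n ≥ 1` and every `t ≥ n t₀`,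
`K^{*n}(t) ≤ 2 n c_K (n/t)^{1+α}`. -/
theorem stmt12 (α c_K : ℝ) (hα : α ∈ Set.Ioo (0:ℝ) 1) (hcK : 0 < c_K)
    (K : ℝ → ℝ) (hKmeas : Measurable K) (hK0 : ∀ t, 0 ≤ K t)
    (hKsupp : ∀ t ≤ (0:ℝ), K t = 0) (hK1 : ∫ t, K t = 1)
    (hKtail : Tendsto (fun t : ℝ => t ^ (1 + α) * K t) atTop (nhds c_K)) :
    ∃ t₀ : ℝ, 0 < t₀ ∧ ∀ n : ℕ, 1 ≤ n → ∀ t : ℝ, (n : ℝ) * t₀ ≤ t →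
      Kconv K (n - 1) t ≤ 2 * (n : ℝ) * c_K * ((n : ℝ) / t) ^ (1 + α) :=
  stmt12_general α c_K hα hcK K hKmeas hK0 hK1 hKtail
end

section
/- For every ξ > 1/2, the following two triple integrals over [0,∞)³ are finite: (i) ∫∫∫ (1 + r₁r₂ + r₁r₃ + r₂r₃)^{−3/2} (log(e + r₁ + r₂) log(e + r₂ + r₃))^{−ξ} dr₁ dr₂ dr₃ < ∞, and (ii) ∫∫∫ (1 + r₁ + r₂)^{−3/2} (1 + r₂ + r₃)^{−3/2} (log(e + r₁ + r₂) log(e + r₂ + r₃))^{−ξ} dr₁ dr₂ dr₃ < ∞. -/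
/-!
Since `log (e + r₁ + r₂)` and `log (e + r₂ + r₃)` are both at least `log (e + r₂)`, each integrand
is at most `log (e + r₂) ^ (-2ξ)` times a kernel whose integral over `r₁, r₃` is
`O(min (r₂ ^ (-1/2), r₂⁻¹))`, and `min (x ^ (-1/2), x⁻¹) log (e + x) ^ (-2ξ)` is integrable on
`(0, ∞)` because `2ξ > 1`. For the kernel of (ii) the `r₁, r₃`-integral is exactly `4 / (1 + r₂)`.
For the kernel of (i), writing `1 + r₁r₂ + r₁r₃ + r₂r₃ = (1 + r₁r₂) + (r₁ + r₂) r₃`, the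
`r₃`-integral is `2 (r₁ + r₂)⁻¹ (1 + r₁r₂)^(-1/2)`; bounding `(1 + r₁r₂)^(-1/2) ≤ (r₁r₂)^(-θ)` and
splitting the `r₁`-integral at `r₂` gives `O(r₂ ^ (-2θ))`, and `θ = 1/4`, `θ = 1/2` give the two
halves of the minimum.
-/

open MeasureTheory Set Filter Real Topology

theorem integrableOn_prod_prod_of_lintegral_lt_top {α β γ : Type*} [MeasurableSpace α]
    [MeasurableSpace β] [MeasurableSpace γ] {μ : Measure α} {ν : Measure β} {ρ : Measure γ}
    [SFinite μ] [SFinite ν] [SFinite ρ] {s : Set α} {t : Set β} {u : Set γ}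
    {f : α × β × γ → ℝ} (hf : Measurable f)
    (h : ∫⁻ y in t, ∫⁻ x in s, ∫⁻ z in u, ‖f (x, y, z)‖ₑ ∂ρ ∂μ ∂ν < ⊤) :
    IntegrableOn f (s ×ˢ t ×ˢ u) (μ.prod (ν.prod ρ)) := by
  have hF : Measurable fun p : α × β => ∫⁻ z in u, ‖f (p.1, p.2, z)‖ₑ ∂ρ :=
    Measurable.lintegral_prod_right' (f := fun q : (α × β) × γ => ‖f (q.1.1, q.1.2, q.2)‖ₑ)
      (by fun_prop)
  refine ⟨hf.aestronglyMeasurable, ?_⟩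
  rw [hasFiniteIntegral_def, ← Measure.prod_restrict, ← Measure.prod_restrict,
    lintegral_prod _ hf.enorm.aemeasurable, lintegral_congr fun x =>
      lintegral_prod (fun p => ‖f (x, p)‖ₑ) (hf.comp measurable_prodMk_left).enorm.aemeasurable]
  rwa [lintegral_lintegral_swap hF.aemeasurable]

theorem lintegral_Ioi_of_hasDerivAt_of_nonneg' {g g' : ℝ → ℝ} {a l : ℝ}
    (hderiv : ∀ x ∈ Ici a, HasDerivAt g (g' x) x) (g'pos : ∀ x ∈ Ioi a, 0 ≤ g' x)
    (hg : Tendsto g atTop (𝓝 l)) :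
    ∫⁻ x in Ioi a, ENNReal.ofReal (g' x) = ENNReal.ofReal (l - g a) := by
  rw [← integral_Ioi_of_hasDerivAt_of_nonneg' hderiv g'pos hg,
    ofReal_integral_eq_lintegral_ofReal (integrableOn_Ioi_deriv_of_nonneg' hderiv g'pos hg)
      ((ae_restrict_iff' measurableSet_Ioi).2 (ae_of_all _ g'pos))]

theorem lintegral_Ioi_rpow_affine {k s r : ℝ} (hk : 0 < k) (hs : 0 < s) (hr : r < -1) :
    ∫⁻ x in Ioi 0, ENNReal.ofReal ((k + s * x) ^ r) =
      ENNReal.ofReal (-k ^ (r + 1) / (s * (r + 1))) := by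
  have hpos : ∀ x ∈ Ici (0:ℝ), 0 < k + s * x := fun x (hx : 0 ≤ x) => by positivity
  have hderiv : ∀ x ∈ Ici (0:ℝ),
      HasDerivAt (fun x => (k + s * x) ^ (r + 1) / (s * (r + 1))) ((k + s * x) ^ r) x := by
    intro x hx
    have h := (((hasDerivAt_id x).const_mul s).const_add k).rpow_const (p := r + 1)
      (Or.inl (hpos x hx).ne')
    refine (h.div_const (s * (r + 1))).congr_deriv ?_
    have : r + 1 ≠ 0 := by linarith
    rw [add_sub_cancel_right, id]
    field_simp
  have hlim : Tendsto (fun x => (k + s * x) ^ (r + 1) / (s * (r + 1))) atTop (𝓝 0) := by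
    have h := (tendsto_rpow_neg_atTop (by linarith : 0 < -(r + 1))).comp
      (tendsto_atTop_add_const_left _ k (tendsto_id.const_mul_atTop hs))
    simpa [Function.comp_def] using h.div_const (s * (r + 1))
  rw [lintegral_Ioi_of_hasDerivAt_of_nonneg' hderiv
    (fun x hx => (rpow_pos_of_pos (hpos x (mem_Ici_of_Ioi hx)) r).le) hlim]
  simp [neg_div]

theorem lintegral_Ioi_inv_rpow_three_halves {k s : ℝ} (hk : 0 < k) (hs : 0 < s) :
    ∫⁻ x in Ioi 0, ENNReal.ofReal (((k + s * x) ^ (3 / 2 : ℝ))⁻¹) =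
      ENNReal.ofReal (2 * k ^ (-(1 / 2 : ℝ)) / s) := by
  have hpos : ∀ x ∈ Ioi (0:ℝ), 0 ≤ k + s * x := fun x (hx : 0 < x) => by positivity
  rw [setLIntegral_congr_fun measurableSet_Ioi fun x hx => by rw [← rpow_neg (hpos x hx)],
    lintegral_Ioi_rpow_affine hk hs (by norm_num)]
  congr 1
  rw [show -(3 / 2 : ℝ) + 1 = -(1 / 2) by norm_num]
  field_simp

theorem lintegral_Ioc_rpow {r b : ℝ} (hr : -1 < r) (hb : 0 ≤ b) :
    ∫⁻ x in Ioc 0 b, ENNReal.ofReal (x ^ r) = ENNReal.ofReal (b ^ (r + 1) / (r + 1)) := by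
  have hint : IntegrableOn (fun x : ℝ => x ^ r) (Ioc 0 b) :=
    (intervalIntegrable_iff_integrableOn_Ioc_of_le hb).1
      (intervalIntegral.intervalIntegrable_rpow' hr)
  rw [← ofReal_integral_eq_lintegral_ofReal hint
    ((ae_restrict_iff' measurableSet_Ioc).2 (ae_of_all _ fun x hx => rpow_nonneg hx.1.le r)),
    ← intervalIntegral.integral_of_le hb, integral_rpow (Or.inl hr),
    zero_rpow (by linarith), sub_zero]

theorem lintegral_Ioi_rpow {r b : ℝ} (hr : r < -1) (hb : 0 < b) :
    ∫⁻ x in Ioi b, ENNReal.ofReal (x ^ r) = ENNReal.ofReal (-b ^ (r + 1) / (r + 1)) := by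
  rw [← ofReal_integral_eq_lintegral_ofReal (integrableOn_Ioi_rpow_of_lt hr hb)
    ((ae_restrict_iff' measurableSet_Ioi).2
      (ae_of_all _ fun x hx => rpow_nonneg (hb.trans hx).le r)),
    integral_Ioi_rpow_of_lt hr hb]

theorem lintegral_inv_add_mul_rpow_neg_le {θ b : ℝ} (hθ₀ : 0 < θ) (hθ₁ : θ < 1) (hb : 0 < b) :
    ∫⁻ a in Ioi 0, ENNReal.ofReal ((a + b)⁻¹ * a ^ (-θ)) ≤
      ENNReal.ofReal (b ^ (-θ) / (θ * (1 - θ))) := by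
  have hnear : ∫⁻ a in Ioc 0 b, ENNReal.ofReal ((a + b)⁻¹ * a ^ (-θ)) ≤
      ENNReal.ofReal (b ^ (-θ) / (1 - θ)) := calc
    _ ≤ ∫⁻ a in Ioc 0 b, ENNReal.ofReal b⁻¹ * ENNReal.ofReal (a ^ (-θ)) := by
      refine setLIntegral_mono' measurableSet_Ioc fun a ha => ?_
      rw [← ENNReal.ofReal_mul (by positivity)]
      gcongr
      · exact (rpow_pos_of_pos ha.1 _).le
      · linarith [ha.1]
    _ = ENNReal.ofReal (b ^ (-θ) / (1 - θ)) := by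
      rw [lintegral_const_mul' _ _ ENNReal.ofReal_ne_top, lintegral_Ioc_rpow (by linarith) hb.le,
        ← ENNReal.ofReal_mul (by positivity)]
      congr 1
      rw [rpow_add hb, rpow_one, neg_add_eq_sub]
      have : 1 - θ ≠ 0 := by linarith
      field_simp
  have hfar : ∫⁻ a in Ioi b, ENNReal.ofReal ((a + b)⁻¹ * a ^ (-θ)) ≤
      ENNReal.ofReal (b ^ (-θ) / θ) := calc
    _ ≤ ∫⁻ a in Ioi b, ENNReal.ofReal (a ^ (-θ - 1)) := by
      refine setLIntegral_mono' measurableSet_Ioi fun a ha => ?_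
      have ha₀ : 0 < a := hb.trans ha
      rw [rpow_sub ha₀, rpow_one, div_eq_mul_inv, mul_comm]
      gcongr
      linarith
    _ = ENNReal.ofReal (b ^ (-θ) / θ) := by
      rw [lintegral_Ioi_rpow (by linarith) hb]
      congr 1
      rw [sub_add_cancel, neg_div_neg_eq]
  calc _ ≤ ∫⁻ a in Ioc 0 b ∪ Ioi b, ENNReal.ofReal ((a + b)⁻¹ * a ^ (-θ)) := by
        rw [Ioc_union_Ioi_eq_Ioi hb.le]
    _ ≤ ENNReal.ofReal (b ^ (-θ) / (1 - θ)) + ENNReal.ofReal (b ^ (-θ) / θ) :=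
        (lintegral_union_le _ _ _).trans (add_le_add hnear hfar)
    _ = ENNReal.ofReal (b ^ (-θ) / (θ * (1 - θ))) := by
      have : 0 < 1 - θ := by linarith
      rw [← ENNReal.ofReal_add (by positivity) (by positivity)]
      congr 1
      field_simp
      ring

theorem lintegral_inv_add_mul_one_add_mul_rpow_le {θ b : ℝ} (hθ₀ : 0 < θ) (hθ : θ ≤ 1 / 2)
    (hb : 0 < b) :
    ∫⁻ a in Ioi 0, ENNReal.ofReal ((a + b)⁻¹ * (1 + a * b) ^ (-(1 / 2 : ℝ))) ≤
      ENNReal.ofReal (b ^ (-(2 * θ)) / (θ * (1 - θ))) := calc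
  _ ≤ ∫⁻ a in Ioi 0, ENNReal.ofReal (b ^ (-θ)) * ENNReal.ofReal ((a + b)⁻¹ * a ^ (-θ)) := by
    refine setLIntegral_mono' measurableSet_Ioi fun a (ha : 0 < a) => ?_
    rw [← ENNReal.ofReal_mul (rpow_pos_of_pos hb _).le]
    refine ENNReal.ofReal_le_ofReal ?_
    calc (a + b)⁻¹ * (1 + a * b) ^ (-(1 / 2 : ℝ))
        ≤ (a + b)⁻¹ * (a * b) ^ (-θ) := by
          gcongr
          calc (1 + a * b) ^ (-(1 / 2 : ℝ)) ≤ (1 + a * b) ^ (-θ) :=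
                rpow_le_rpow_of_exponent_le (by nlinarith) (by linarith)
            _ ≤ (a * b) ^ (-θ) := rpow_le_rpow_of_nonpos (by positivity) (by linarith) (by linarith)
      _ = b ^ (-θ) * ((a + b)⁻¹ * a ^ (-θ)) := by rw [mul_rpow ha.le hb.le]; ring
  _ = ENNReal.ofReal (b ^ (-θ)) * ∫⁻ a in Ioi 0, ENNReal.ofReal ((a + b)⁻¹ * a ^ (-θ)) :=
    lintegral_const_mul' _ _ ENNReal.ofReal_ne_top
  _ ≤ ENNReal.ofReal (b ^ (-θ)) * ENNReal.ofReal (b ^ (-θ) / (θ * (1 - θ))) :=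
    mul_le_mul_right (lintegral_inv_add_mul_rpow_neg_le hθ₀ (by linarith) hb) _
  _ = ENNReal.ofReal (b ^ (-(2 * θ)) / (θ * (1 - θ))) := by
    rw [← ENNReal.ofReal_mul (rpow_pos_of_pos hb _).le, ← mul_div_assoc, ← rpow_add hb]
    ring_nf

theorem one_le_log_exp_one_add {t : ℝ} (ht : 0 ≤ t) : 1 ≤ log (exp 1 + t) := by
  simpa using log_le_log (exp_pos 1) (le_add_of_nonneg_right ht)

theorem integrableOn_inv_mul_log_rpow_neg {p : ℝ} (hp : 1 < p) :
    IntegrableOn (fun x => (exp 1 + x)⁻¹ * log (exp 1 + x) ^ (-p)) (Ioi 0) := by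
  have hderiv : ∀ x ∈ Ici (0:ℝ), HasDerivAt (fun x => log (exp 1 + x) ^ (1 - p) / (1 - p))
      ((exp 1 + x)⁻¹ * log (exp 1 + x) ^ (-p)) x := by
    intro x (hx : 0 ≤ x)
    have hL := one_le_log_exp_one_add hx
    have h := ((((hasDerivAt_id x).const_add (exp 1)).log (by positivity)).rpow_const
      (p := 1 - p) (Or.inl (by rw [id]; positivity))).div_const (1 - p)
    refine h.congr_deriv ?_
    have : 1 - p ≠ 0 := by linarith
    rw [show 1 - p - 1 = -p by ring, id]
    field_simp
  have hlim : Tendsto (fun x => log (exp 1 + x) ^ (1 - p) / (1 - p)) atTop (𝓝 0) := by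
    have h := (tendsto_rpow_neg_atTop (by linarith : 0 < p - 1)).comp
      (tendsto_log_atTop.comp (tendsto_atTop_add_const_left _ (exp 1) tendsto_id))
    simpa [Function.comp_def] using h.div_const (1 - p)
  refine integrableOn_Ioi_deriv_of_nonneg' hderiv (fun x (hx : 0 < x) => ?_) hlim
  have hL := one_le_log_exp_one_add hx.le
  have : 0 < exp 1 + x := by positivity
  positivity

theorem integrableOn_min_mul_log_rpow_neg {p : ℝ} (hp : 1 < p) :
    IntegrableOn (fun x => min (x ^ (-(1 / 2 : ℝ))) x⁻¹ * log (exp 1 + x) ^ (-p)) (Ioi 0) := by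
  have hmeas : AEStronglyMeasurable
      (fun x => min (x ^ (-(1 / 2 : ℝ))) x⁻¹ * log (exp 1 + x) ^ (-p)) := by
    fun_prop
  have hL : ∀ x : ℝ, 0 < x → 0 < log (exp 1 + x) ^ (-p) := fun x hx =>
    rpow_pos_of_pos (by linarith [one_le_log_exp_one_add hx.le]) _
  rw [← Ioc_union_Ioi_eq_Ioi zero_le_one]
  refine IntegrableOn.union ?_ ?_
  · have hint : IntegrableOn (fun x : ℝ => x ^ (-(1 / 2 : ℝ))) (Ioc 0 1) :=
      (intervalIntegrable_iff_integrableOn_Ioc_of_le zero_le_one).1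
        (intervalIntegral.intervalIntegrable_rpow' (by norm_num))
    refine hint.mono' hmeas.restrict ((ae_restrict_iff' measurableSet_Ioc).2 (ae_of_all _ ?_))
    intro x ⟨hx₀, _⟩
    have hx : 0 < x ^ (-(1 / 2 : ℝ)) := rpow_pos_of_pos hx₀ _
    rw [norm_of_nonneg (by have := hL x hx₀; positivity)]
    calc min (x ^ (-(1 / 2 : ℝ))) x⁻¹ * log (exp 1 + x) ^ (-p)
        ≤ x ^ (-(1 / 2 : ℝ)) * 1 :=
          mul_le_mul (min_le_left _ _)
            (rpow_le_one_of_one_le_of_nonpos (one_le_log_exp_one_add hx₀.le) (by linarith))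
            (hL x hx₀).le hx.le
      _ = x ^ (-(1 / 2 : ℝ)) := mul_one _
  · refine ((integrableOn_inv_mul_log_rpow_neg hp).mono_set (Ioi_subset_Ioi zero_le_one)).const_mul
      (1 + exp 1) |>.mono' hmeas.restrict
      ((ae_restrict_iff' measurableSet_Ioi).2 (ae_of_all _ ?_))
    intro x (hx : 1 < x)
    have hx₀ : 0 < x := zero_lt_one.trans hx
    rw [norm_of_nonneg (by have := hL x hx₀; positivity)]
    have : x⁻¹ ≤ (1 + exp 1) * (exp 1 + x)⁻¹ := by
      rw [← div_eq_mul_inv, inv_eq_one_div, div_le_div_iff₀ hx₀ (by positivity)]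
      nlinarith [exp_pos 1]
    calc min (x ^ (-(1 / 2 : ℝ))) x⁻¹ * log (exp 1 + x) ^ (-p)
        ≤ (1 + exp 1) * (exp 1 + x)⁻¹ * log (exp 1 + x) ^ (-p) :=
          mul_le_mul_of_nonneg_right ((min_le_right _ _).trans this) (hL x hx₀).le
      _ = _ := mul_assoc _ _ _

theorem integrableOn_octant_of_abs_le_log_rpow_mul {f : ℝ × ℝ × ℝ → ℝ}
    {K : ℝ → ℝ → ℝ → ℝ} {p C : ℝ} (hp : 1 < p) (hf : Measurable f)
    (hfK : ∀ a b c, 0 < a → 0 < b → 0 < c → |f (a, b, c)| ≤ log (exp 1 + b) ^ (-p) * K a b c)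
    (hK : ∀ b, 0 < b → ∫⁻ a in Ioi 0, ∫⁻ c in Ioi 0, ENNReal.ofReal (K a b c) ≤
      ENNReal.ofReal (C * min (b ^ (-(1 / 2 : ℝ))) b⁻¹)) :
    IntegrableOn f (Ici 0 ×ˢ Ici 0 ×ˢ Ici 0) := by
  have hL : ∀ b : ℝ, 0 < b → 0 ≤ log (exp 1 + b) ^ (-p) := fun b hb =>
    rpow_nonneg (by linarith [one_le_log_exp_one_add hb.le]) _
  refine integrableOn_prod_prod_of_lintegral_lt_top hf ?_
  simp only [← restrict_Ioi_eq_restrict_Ici]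
  calc ∫⁻ b in Ioi 0, ∫⁻ a in Ioi 0, ∫⁻ c in Ioi 0, ‖f (a, b, c)‖ₑ
      ≤ ∫⁻ b in Ioi 0, ENNReal.ofReal (log (exp 1 + b) ^ (-p)) *
          ∫⁻ a in Ioi 0, ∫⁻ c in Ioi 0, ENNReal.ofReal (K a b c) := by
        refine setLIntegral_mono' measurableSet_Ioi fun b (hb : 0 < b) => ?_
        rw [← lintegral_const_mul' _ _ ENNReal.ofReal_ne_top]
        refine setLIntegral_mono' measurableSet_Ioi fun a (ha : 0 < a) => ?_
        rw [← lintegral_const_mul' _ _ ENNReal.ofReal_ne_top]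
        refine setLIntegral_mono' measurableSet_Ioi fun c (hc : 0 < c) => ?_
        rw [enorm_eq_ofReal_abs, ← ENNReal.ofReal_mul (hL b hb)]
        exact ENNReal.ofReal_le_ofReal (hfK a b c ha hb hc)
    _ ≤ ∫⁻ b in Ioi 0, ENNReal.ofReal
          (C * (min (b ^ (-(1 / 2 : ℝ))) b⁻¹ * log (exp 1 + b) ^ (-p))) := by
        refine setLIntegral_mono' measurableSet_Ioi fun b (hb : 0 < b) => ?_
        grw [hK b hb, ← ENNReal.ofReal_mul (hL b hb)]
        exact (congrArg _ (by ring)).le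
    _ < ⊤ := ((integrableOn_min_mul_log_rpow_neg hp).const_mul C).lintegral_lt_top

theorem inv_rpow_log_mul_log_le {ξ a b c : ℝ} (hξ : 0 ≤ ξ) (ha : 0 ≤ a) (hb : 0 ≤ b)
    (hc : 0 ≤ c) :
    ((log (exp 1 + a + b) * log (exp 1 + b + c)) ^ ξ)⁻¹ ≤ log (exp 1 + b) ^ (-(2 * ξ)) := by
  have hL : 0 < log (exp 1 + b) := by linarith [one_le_log_exp_one_add hb]
  have hLa : log (exp 1 + b) ≤ log (exp 1 + a + b) :=
    log_le_log (by positivity) (by linarith)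
  have hLc : log (exp 1 + b) ≤ log (exp 1 + b + c) :=
    log_le_log (by positivity) (by linarith)
  calc ((log (exp 1 + a + b) * log (exp 1 + b + c)) ^ ξ)⁻¹
      ≤ ((log (exp 1 + b) * log (exp 1 + b)) ^ ξ)⁻¹ :=
        inv_anti₀ (by positivity)
          (rpow_le_rpow (by positivity) (mul_le_mul hLa hLc hL.le (hL.trans_le hLa).le) hξ)
    _ = log (exp 1 + b) ^ (-(2 * ξ)) := by
        rw [← rpow_neg (by positivity), mul_rpow hL.le hL.le, ← rpow_add hL]
        ring_nf

theorem abs_mul_inv_rpow_log_mul_log_le {A ξ a b c : ℝ} (hA : 0 ≤ A) (hξ : 0 ≤ ξ) (ha : 0 ≤ a)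
    (hb : 0 ≤ b) (hc : 0 ≤ c) :
    |A * ((log (exp 1 + a + b) * log (exp 1 + b + c)) ^ ξ)⁻¹| ≤
      log (exp 1 + b) ^ (-(2 * ξ)) * A := by
  have hL : 0 ≤ log (exp 1 + a + b) * log (exp 1 + b + c) := by
    rw [add_assoc, add_assoc]
    have := one_le_log_exp_one_add (add_nonneg ha hb)
    have := one_le_log_exp_one_add (add_nonneg hb hc)
    positivity
  rw [abs_of_nonneg (mul_nonneg hA (inv_nonneg.2 (rpow_nonneg hL ξ))), mul_comm]
  exact mul_le_mul_of_nonneg_right (inv_rpow_log_mul_log_le hξ ha hb hc) hA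

theorem lintegral_lintegral_inv_one_add_esymm_two_rpow_le {b : ℝ} (hb : 0 < b) :
    ∫⁻ a in Ioi 0, ∫⁻ c in Ioi 0,
        ENNReal.ofReal (((1 + a * b + a * c + b * c) ^ (3 / 2 : ℝ))⁻¹) ≤
      ENNReal.ofReal (32 / 3 * min (b ^ (-(1 / 2 : ℝ))) b⁻¹) := by
  have hc : ∀ a ∈ Ioi (0:ℝ), ∫⁻ c in Ioi 0,
      ENNReal.ofReal (((1 + a * b + a * c + b * c) ^ (3 / 2 : ℝ))⁻¹) =
        ENNReal.ofReal 2 * ENNReal.ofReal ((a + b)⁻¹ * (1 + a * b) ^ (-(1 / 2 : ℝ))) := by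
    intro a (ha : 0 < a)
    simp_rw [show ∀ c, 1 + a * b + a * c + b * c = (1 + a * b) + (a + b) * c by intro; ring]
    rw [lintegral_Ioi_inv_rpow_three_halves (by positivity) (by positivity),
      ← ENNReal.ofReal_mul zero_le_two]
    congr 1
    ring
  rw [setLIntegral_congr_fun measurableSet_Ioi hc, lintegral_const_mul' _ _ ENNReal.ofReal_ne_top,
    mul_min_of_nonneg _ _ (by norm_num), ENNReal.ofReal_min]
  refine le_min ?_ ?_
  · grw [lintegral_inv_add_mul_one_add_mul_rpow_le (θ := 1 / 4) (by norm_num) (by norm_num) hb,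
      ← ENNReal.ofReal_mul zero_le_two]
    exact (congrArg _ (by ring_nf)).le
  · grw [lintegral_inv_add_mul_one_add_mul_rpow_le (θ := 1 / 2) (by norm_num) le_rfl hb,
      ← ENNReal.ofReal_mul zero_le_two]
    refine ENNReal.ofReal_le_ofReal ?_
    rw [show -(2 * (1 / 2 : ℝ)) = -1 by norm_num, rpow_neg_one]
    ring_nf
    linarith [inv_pos.2 hb]

theorem lintegral_lintegral_inv_one_add_add_rpow_mul_le {b : ℝ} (hb : 0 < b) :
    ∫⁻ a in Ioi 0, ∫⁻ c in Ioi 0,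
        ENNReal.ofReal (((1 + a + b) ^ (3 / 2 : ℝ))⁻¹ * ((1 + b + c) ^ (3 / 2 : ℝ))⁻¹) ≤
      ENNReal.ofReal (4 * min (b ^ (-(1 / 2 : ℝ))) b⁻¹) := by
  have h : ∫⁻ x in Ioi 0, ENNReal.ofReal (((1 + b + x) ^ (3 / 2 : ℝ))⁻¹) =
      ENNReal.ofReal (2 * (1 + b) ^ (-(1 / 2 : ℝ))) := by
    simpa using lintegral_Ioi_inv_rpow_three_halves (k := 1 + b) (by positivity) one_pos
  have hc : ∀ a ∈ Ioi (0:ℝ), ∫⁻ c in Ioi 0,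
      ENNReal.ofReal (((1 + a + b) ^ (3 / 2 : ℝ))⁻¹ * ((1 + b + c) ^ (3 / 2 : ℝ))⁻¹) =
        ENNReal.ofReal (((1 + b + a) ^ (3 / 2 : ℝ))⁻¹) *
          ENNReal.ofReal (2 * (1 + b) ^ (-(1 / 2 : ℝ))) := by
    intro a (ha : 0 < a)
    simp_rw [ENNReal.ofReal_mul (inv_nonneg.2 (rpow_nonneg (by positivity : 0 ≤ 1 + a + b) _))]
    rw [lintegral_const_mul' _ _ ENNReal.ofReal_ne_top, h, add_right_comm]
  rw [setLIntegral_congr_fun measurableSet_Ioi hc, lintegral_mul_const' _ _ ENNReal.ofReal_ne_top, h,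
    ← ENNReal.ofReal_mul (by positivity)]
  refine ENNReal.ofReal_le_ofReal ?_
  have hu : (1 + b) ^ (-(1 / 2 : ℝ)) * (1 + b) ^ (-(1 / 2 : ℝ)) = (1 + b)⁻¹ := by
    rw [← rpow_add (by positivity)]
    norm_num [rpow_neg_one]
  have hu₁ : (1 + b) ^ (-(1 / 2 : ℝ)) ≤ 1 :=
    rpow_le_one_of_one_le_of_nonpos (by linarith) (by norm_num)
  have hu₂ : (1 + b) ^ (-(1 / 2 : ℝ)) ≤ b ^ (-(1 / 2 : ℝ)) :=
    rpow_le_rpow_of_nonpos hb (by linarith) (by norm_num)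
  calc 2 * (1 + b) ^ (-(1 / 2 : ℝ)) * (2 * (1 + b) ^ (-(1 / 2 : ℝ)))
      = 4 * ((1 + b) ^ (-(1 / 2 : ℝ)) * (1 + b) ^ (-(1 / 2 : ℝ))) := by ring
    _ ≤ 4 * min (b ^ (-(1 / 2 : ℝ))) b⁻¹ := by
      refine mul_le_mul_of_nonneg_left (le_min ?_ ?_) (by norm_num)
      · exact (mul_le_of_le_one_right (by positivity) hu₁).trans hu₂
      · exact hu ▸ inv_anti₀ hb (by linarith)

/-- For every `ξ > 1/2`, the two triple integrals over `[0,∞)³` appearing in the proof of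
the variance bound (7.6)–(7.7) are finite, i.e. the integrands are integrable on
`[0,∞)³`. -/
theorem stmt19 (ξ : ℝ) (hξ : 1 / 2 < ξ) :
    IntegrableOn
      (fun r : ℝ × ℝ × ℝ =>
        ((1 + r.1 * r.2.1 + r.1 * r.2.2 + r.2.1 * r.2.2) ^ ((3:ℝ) / 2))⁻¹ *
          ((Real.log (Real.exp 1 + r.1 + r.2.1) *
              Real.log (Real.exp 1 + r.2.1 + r.2.2)) ^ ξ)⁻¹)
      (Set.Ici (0:ℝ) ×ˢ Set.Ici (0:ℝ) ×ˢ Set.Ici (0:ℝ)) volume ∧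
    IntegrableOn
      (fun r : ℝ × ℝ × ℝ =>
        ((1 + r.1 + r.2.1) ^ ((3:ℝ) / 2))⁻¹ * ((1 + r.2.1 + r.2.2) ^ ((3:ℝ) / 2))⁻¹ *
          ((Real.log (Real.exp 1 + r.1 + r.2.1) *
              Real.log (Real.exp 1 + r.2.1 + r.2.2)) ^ ξ)⁻¹)
      (Set.Ici (0:ℝ) ×ˢ Set.Ici (0:ℝ) ×ˢ Set.Ici (0:ℝ)) volume := by
  have hp : 1 < 2 * ξ := by linarith
  have hξ₀ : 0 ≤ ξ := by linarith
  refine ⟨integrableOn_octant_of_abs_le_log_rpow_mul hp (by fun_prop) (fun a b c ha hb hc => ?_)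
      fun b hb => lintegral_lintegral_inv_one_add_esymm_two_rpow_le hb,
    integrableOn_octant_of_abs_le_log_rpow_mul hp (by fun_prop) (fun a b c ha hb hc => ?_)
      fun b hb => lintegral_lintegral_inv_one_add_add_rpow_mul_le hb⟩
  · exact abs_mul_inv_rpow_log_mul_log_le (by positivity) hξ₀ ha.le hb.le hc.le
  · exact abs_mul_inv_rpow_log_mul_log_le (by positivity) hξ₀ ha.le hb.le hc.le
end
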